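/- Let F be a finite field, n ≥ 2, and R = M_n(F); assume det(-I_n) = 1 (i.e., char F = 2 or n is even). Let S ⊆ R with 0 ∉ S and u s v ∈ S for all u, v ∈ SL_n(F) and s ∈ S. Let A be the adjacency matrix over ℂ of the Cayley graph Γ(R,S). Then Γ(R,S) has no perfect state transfer: for every real number t > 0 and all distinct X, Y ∈ M_n(F), the (X,Y) entry of the matrix exponential exp(i t A) has absolute value strictly less than 1. -/

import Mathlib

/-!
Since `-I` has determinant one, `S = -S` and the adjacency matrix `A` is Hermitian, so
`E = exp (i t A)` is unitary and each of its rows has Euclidean norm one. Given `X ≠ Y`, a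
transvection `u ∈ SL_n(F)` moves `Y - X`, and `Z ↦ u (Z - X) + X` is then an automorphism of the
Cayley graph that fixes `X` and moves `Y`. Automorphisms commute with `A`, hence with `E`, so
`E X Y = E X (u (Y - X) + X)`: two equal entries in the row of `X`, each of squared norm at
most `1/2`.
-/

open scoped Matrix

namespace Matrix

variable {m : Type*} [Fintype m] [DecidableEq m] {𝕜 : Type*} [RCLike 𝕜]

open scoped Norms.Operator in
theorem exp_submatrix_equiv (e : m ≃ m) (M : Matrix m m 𝕜) :
    (NormedSpace.exp M).submatrix e e = NormedSpace.exp (M.submatrix e e) :=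
  NormedSpace.map_exp (reindexAlgEquiv ℚ 𝕜 e.symm) (continuous_id.matrix_submatrix _ _) M

theorem exp_apply_equiv {e : m ≃ m} {M : Matrix m m 𝕜} (hM : ∀ a b, M (e a) (e b) = M a b)
    (a b : m) : NormedSpace.exp M (e a) (e b) = NormedSpace.exp M a b := by
  have hM' : M.submatrix e e = M := Matrix.ext hM
  rw [← submatrix_apply (A := NormedSpace.exp M), exp_submatrix_equiv, hM']

theorem exp_mem_unitaryGroup_of_conjTranspose_eq_neg {M : Matrix m m 𝕜} (hM : Mᴴ = -M) :
    NormedSpace.exp M ∈ unitaryGroup m 𝕜 := by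
  rw [mem_unitaryGroup_iff, star_eq_conjTranspose, ← exp_conjTranspose,
    ← exp_add_of_commute _ _ (hM ▸ (Commute.refl M).neg_right), hM, add_neg_cancel,
    NormedSpace.exp_zero]

theorem IsHermitian.exp_I_mul_smul_mem_unitaryGroup {A : Matrix m m ℂ} (hA : A.IsHermitian)
    (t : ℝ) : NormedSpace.exp ((Complex.I * t) • A) ∈ unitaryGroup m ℂ := by
  refine exp_mem_unitaryGroup_of_conjTranspose_eq_neg ?_
  rw [conjTranspose_smul, hA.eq, ← neg_smul]
  simp

theorem sum_sq_norm_row_of_mem_unitaryGroup {U : Matrix m m 𝕜} (hU : U ∈ unitaryGroup m 𝕜)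
    (i : m) : ∑ j, ‖U i j‖ ^ 2 = 1 := by
  have hdiag : (U * Uᴴ) i i = 1 := by rw [← star_eq_conjTranspose, hU.2, one_apply_eq]
  simp only [mul_apply, conjTranspose_apply, RCLike.star_def, RCLike.mul_conj] at hdiag
  exact_mod_cast hdiag

theorem sq_norm_add_sq_norm_le_one_of_mem_unitaryGroup {U : Matrix m m 𝕜}
    (hU : U ∈ unitaryGroup m 𝕜) (i : m) {j k : m} (hjk : j ≠ k) :
    ‖U i j‖ ^ 2 + ‖U i k‖ ^ 2 ≤ 1 := by
  rw [← sum_sq_norm_row_of_mem_unitaryGroup hU i,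
    ← Finset.sum_pair (f := fun x => ‖U i x‖ ^ 2) hjk]
  exact Finset.sum_le_sum_of_subset_of_nonneg (Finset.subset_univ _) fun _ _ _ => sq_nonneg _

theorem norm_apply_lt_one_of_mem_unitaryGroup {U : Matrix m m 𝕜} (hU : U ∈ unitaryGroup m 𝕜)
    {i j k : m} (hjk : j ≠ k) (hU_eq : U i j = U i k) : ‖U i j‖ < 1 := by
  have h := sq_norm_add_sq_norm_le_one_of_mem_unitaryGroup hU i hjk
  rw [← hU_eq] at h
  nlinarith [norm_nonneg (U i j)]

theorem exists_specialLinearGroup_mul_ne {n R : Type*} [Fintype n] [DecidableEq n] [Nontrivial n]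
    [CommRing R] {M : Matrix n n R} (hM : M ≠ 0) :
    ∃ u : SpecialLinearGroup n R, (u : Matrix n n R) * M ≠ M := by
  obtain ⟨j, k, hjk⟩ : ∃ j k, M j k ≠ 0 := by simpa [← Matrix.ext_iff] using hM
  obtain ⟨i, hij⟩ := exists_ne j
  refine ⟨⟨transvection i j 1, det_transvection_of_ne i j hij 1⟩, fun h => hjk ?_⟩
  simpa using congrFun (congrFun h i) k

end Matrix

namespace Units

variable {R : Type*} [Ring R]

def mulLeftAbout (u : Rˣ) (x : R) : Equiv.Perm R :=
  (Equiv.subRight x).trans ((Units.mulLeft u).trans (Equiv.addRight x))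

theorem mulLeftAbout_apply (u : Rˣ) (x z : R) : u.mulLeftAbout x z = u * (z - x) + x := rfl

theorem mulLeftAbout_self (u : Rˣ) (x : R) : u.mulLeftAbout x x = x := by
  simp [mulLeftAbout_apply]

theorem mulLeftAbout_sub (u : Rˣ) (x a b : R) :
    u.mulLeftAbout x a - u.mulLeftAbout x b = u * (a - b) := by
  simp only [mulLeftAbout_apply, add_sub_add_right_eq_sub, ← mul_sub, sub_sub_sub_cancel_right]

theorem mulLeftAbout_eq_self_iff (u : Rˣ) (x z : R) :
    u.mulLeftAbout x z = z ↔ u * (z - x) = z - x := by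
  rw [mulLeftAbout_apply, eq_sub_iff_add_eq]

end Units

section CayleyGraph

variable {R : Type*} [Ring R] {S : Set R}

open scoped Classical in
noncomputable def cayleyAdjMatrix (S : Set R) : Matrix R R ℂ :=
  Matrix.of fun a b => if a - b ∈ S then 1 else 0

theorem cayleyAdjMatrix_isHermitian (hS : ∀ s ∈ S, -s ∈ S) :
    (cayleyAdjMatrix S).IsHermitian := by
  classical
  have hswap (a b : R) : b - a ∈ S ↔ a - b ∈ S :=
    ⟨fun h => by simpa using hS _ h, fun h => by simpa using hS _ h⟩
  ext a b
  simpa [cayleyAdjMatrix] using if_congr (hswap a b) rfl rfl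

theorem cayleyAdjMatrix_mulLeftAbout {u : Rˣ} (hu : ∀ s, (u : R) * s ∈ S ↔ s ∈ S)
    (x a b : R) :
    cayleyAdjMatrix S (u.mulLeftAbout x a) (u.mulLeftAbout x b) = cayleyAdjMatrix S a b := by
  classical
  simpa [cayleyAdjMatrix, Units.mulLeftAbout_sub] using if_congr (hu (a - b)) rfl rfl

end CayleyGraph

open scoped Classical in
theorem stmt19_general {F : Type*} [Field F] [Fintype F] {n : ℕ} (hn : 2 ≤ n)
    (hdet : (-1 : Matrix (Fin n) (Fin n) F).det = 1)
    (S : Set (Matrix (Fin n) (Fin n) F))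
    (hstab : ∀ u v : Matrix (Fin n) (Fin n) F, u.det = 1 → v.det = 1 →
      ∀ s ∈ S, u * s * v ∈ S)
    (A : Matrix (Matrix (Fin n) (Fin n) F) (Matrix (Fin n) (Fin n) F) ℂ)
    (hA : A = Matrix.of fun a b => if a - b ∈ S then (1 : ℂ) else 0) :
    ∀ t : ℝ, 0 < t → ∀ X Y : Matrix (Fin n) (Fin n) F, X ≠ Y →
      ‖NormedSpace.exp ((Complex.I * (t : ℂ)) • A) X Y‖ < 1 := by
  intro t _ X Y hXY
  change A = cayleyAdjMatrix S at hA
  have hneg (s) (hs : s ∈ S) : -s ∈ S := by simpa using hstab (-1) 1 hdet Matrix.det_one s hs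
  have : Nontrivial (Fin n) := Fin.nontrivial_iff_two_le.2 hn
  obtain ⟨u, hu⟩ := Matrix.exists_specialLinearGroup_mul_ne (sub_ne_zero.2 hXY.symm)
  have hSu (s) : (u : Matrix (Fin n) (Fin n) F) * s ∈ S ↔ s ∈ S := by
    refine ⟨fun h => ?_, fun h => by simpa using hstab u 1 u.det_coe Matrix.det_one s h⟩
    have h' := hstab _ 1 (u⁻¹).det_coe Matrix.det_one _ h
    rwa [mul_one, ← mul_assoc, ← Matrix.SpecialLinearGroup.coe_mul, inv_mul_cancel,
      Matrix.SpecialLinearGroup.coe_one, one_mul] at h'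
  set σ := (Matrix.SpecialLinearGroup.toGL u).mulLeftAbout X
  have hAσ (a b) : ((Complex.I * t) • A) (σ a) (σ b) = ((Complex.I * t) • A) a b := by
    rw [Matrix.smul_apply, Matrix.smul_apply, hA,
      cayleyAdjMatrix_mulLeftAbout (u := Matrix.SpecialLinearGroup.toGL u) hSu]
  have hσY : σ Y ≠ Y := by rwa [Ne, Units.mulLeftAbout_eq_self_iff]
  refine Matrix.norm_apply_lt_one_of_mem_unitaryGroup
    ((hA ▸ cayleyAdjMatrix_isHermitian hneg).exp_I_mul_smul_mem_unitaryGroup t) hσY.symm ?_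
  rw [← Matrix.exp_apply_equiv hAσ, Units.mulLeftAbout_self]

open scoped Classical in
theorem stmt19 {F : Type*} [Field F] [Fintype F] {n : ℕ} (hn : 2 ≤ n)
    (hdet : (-1 : Matrix (Fin n) (Fin n) F).det = 1)
    (S : Set (Matrix (Fin n) (Fin n) F))
    (h0 : (0 : Matrix (Fin n) (Fin n) F) ∉ S)
    (hstab : ∀ u v : Matrix (Fin n) (Fin n) F, u.det = 1 → v.det = 1 →
      ∀ s ∈ S, u * s * v ∈ S)
    (A : Matrix (Matrix (Fin n) (Fin n) F) (Matrix (Fin n) (Fin n) F) ℂ)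
    (hA : A = Matrix.of fun a b => if a - b ∈ S then (1 : ℂ) else 0) :
    ∀ t : ℝ, 0 < t → ∀ X Y : Matrix (Fin n) (Fin n) F, X ≠ Y →
      ‖NormedSpace.exp ((Complex.I * (t : ℂ)) • A) X Y‖ < 1 :=
  stmt19_general hn hdet S hstab A hA
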